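/- Let F₁ and F₂ be CDFs of ℤ≥0-valued random variables, with survival function F̄₂(j) = 1 − F₂(j) and conventions F₁(−1)=0, F̄₂(−1)=1. Define p*(i,j) = max(min(F₁(i), F̄₂(j−1)) − max(F₁(i−1), F̄₂(j)), 0). Then p* is a probability mass function on ℤ≥0 × ℤ≥0 whose marginals have CDFs F₁ and F₂ respectively. -/
import Mathlib


open Filter

/-- `F(i−1)` with the convention `F(−1) = 0`. -/
noncomputable def cdfPrev (F : ℕ → ℝ) (i : ℕ) : ℝ := if i = 0 then 0 else F (i - 1)

/-- `F̄(j−1) = 1 − F(j−1)` with the convention `F̄(−1) = 1`. -/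
noncomputable def survPrev (F : ℕ → ℝ) (j : ℕ) : ℝ := if j = 0 then 1 else 1 - F (j - 1)

/-- `F` is the CDF of a ℤ≥0-valued random variable. -/
def IsCDF (F : ℕ → ℝ) : Prop :=
  Monotone F ∧ 0 ≤ F 0 ∧ Tendsto F atTop (nhds 1)

/-- The antimonotone (Fréchet–Hoeffding lower) coupling in pmf form:
`p*(i,j) = [min(F₁(i), F̄₂(j−1)) − max(F₁(i−1), F̄₂(j))]⁺`. -/
noncomputable def antiCoupling (F₁ F₂ : ℕ → ℝ) (i j : ℕ) : ℝ :=
  max (min (F₁ i) (survPrev F₂ j) - max (cdfPrev F₁ i) (1 - F₂ j)) 0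

section aux

lemma Lstep (a b c d e : ℝ) (hab : a ≤ b) (hcd : c ≤ d) (hde : d ≤ e) :
    max (min b e - max a d) 0 + max (min b d - max a c) 0
      = max (min b e - max a c) 0 := by
  simp only [min_def, max_def]
  split_ifs <;> linarith

lemma Lstep' (a b b' c d : ℝ) (hab : a ≤ b) (hbb : b ≤ b') (hcd : c ≤ d) :
    max (min b d - max a c) 0 + max (min b' d - max b c) 0
      = max (min b' d - max a c) 0 := by
  simp only [min_def, max_def]
  split_ifs <;> linarith

variable {F : ℕ → ℝ}

lemma isCDF_nonneg (h : IsCDF F) (i : ℕ) : 0 ≤ F i := h.2.1.trans (h.1 (Nat.zero_le i))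

lemma isCDF_le_one (h : IsCDF F) (i : ℕ) : F i ≤ 1 := Monotone.ge_of_tendsto h.1 h.2.2 i

lemma cdfPrev_succ (F : ℕ → ℝ) (i : ℕ) : cdfPrev F (i + 1) = F i := by
  simp [cdfPrev]

lemma survPrev_zero (F : ℕ → ℝ) : survPrev F 0 = 1 := by simp [survPrev]

lemma survPrev_succ (F : ℕ → ℝ) (j : ℕ) : survPrev F (j + 1) = 1 - F j := by
  simp [survPrev]

lemma cdfPrev_nonneg (h : IsCDF F) (i : ℕ) : 0 ≤ cdfPrev F i := by
  unfold cdfPrev; split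
  · exact le_refl 0
  · exact isCDF_nonneg h _

lemma cdfPrev_le_self (h : IsCDF F) (i : ℕ) : cdfPrev F i ≤ F i := by
  unfold cdfPrev; split
  · exact isCDF_nonneg h _
  · exact h.1 (Nat.sub_le i 1)

lemma cdfPrev_le_one (h : IsCDF F) (i : ℕ) : cdfPrev F i ≤ 1 :=
  (cdfPrev_le_self h i).trans (isCDF_le_one h i)

lemma cdfPrev_mono (h : IsCDF F) : Monotone (cdfPrev F) := by
  apply monotone_nat_of_le_succ
  intro n
  rw [cdfPrev_succ]
  exact cdfPrev_le_self h n

lemma survPrev_eq (F : ℕ → ℝ) (j : ℕ) : survPrev F j = 1 - cdfPrev F j := by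
  unfold survPrev cdfPrev; split <;> ring

lemma cdfPrev_tendsto (h : IsCDF F) : Tendsto (cdfPrev F) atTop (nhds 1) := by
  rw [← tendsto_add_atTop_iff_nat 1]
  simpa only [cdfPrev_succ] using h.2.2

lemma survPrev_tendsto (h : IsCDF F) : Tendsto (survPrev F) atTop (nhds 0) := by
  have : Tendsto (fun j => 1 - cdfPrev F j) atTop (nhds (1 - 1)) :=
    tendsto_const_nhds.sub (cdfPrev_tendsto h)
  rw [sub_self] at this
  exact this.congr fun j => (survPrev_eq F j).symm

end aux

section main

variable {F₁ F₂ : ℕ → ℝ}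

lemma antiCoupling_nonneg (F₁ F₂ : ℕ → ℝ) (i j : ℕ) : 0 ≤ antiCoupling F₁ F₂ i j :=
  le_max_right _ _

/-- Partial row sums. -/
lemma row_partial (h₁ : IsCDF F₁) (h₂ : IsCDF F₂) (i n : ℕ) :
    ∑ j ∈ Finset.range n, antiCoupling F₁ F₂ i j
      = max (min (F₁ i) 1 - max (cdfPrev F₁ i) (survPrev F₂ n)) 0 := by
  induction n with
  | zero =>
    rw [Finset.range_zero, Finset.sum_empty, survPrev_zero, eq_comm, max_eq_right]
    have := min_le_right (F₁ i) 1
    have := le_max_right (cdfPrev F₁ i) (1 : ℝ)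
    linarith
  | succ n ih =>
    rw [Finset.sum_range_succ, ih]
    have key := Lstep (cdfPrev F₁ i) (F₁ i) (survPrev F₂ (n+1)) (survPrev F₂ n) 1
      (cdfPrev_le_self h₁ i)
      (by rw [survPrev_eq, survPrev_eq]; have := cdfPrev_mono h₂ (Nat.le_succ n); linarith)
      (by rw [survPrev_eq]; linarith [cdfPrev_nonneg h₂ n])
    unfold antiCoupling
    rw [← survPrev_succ F₂ n]
    exact key

lemma row_hasSum (h₁ : IsCDF F₁) (h₂ : IsCDF F₂) (i : ℕ) :
    HasSum (fun j => antiCoupling F₁ F₂ i j) (F₁ i - cdfPrev F₁ i) := by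
  rw [hasSum_iff_tendsto_nat_of_nonneg (fun j => antiCoupling_nonneg F₁ F₂ i j)]
  have hlim : Tendsto
      (fun n => max (min (F₁ i) 1 - max (cdfPrev F₁ i) (survPrev F₂ n)) 0) atTop
      (nhds (max (min (F₁ i) 1 - max (cdfPrev F₁ i) 0) 0)) :=
    ((tendsto_const_nhds.sub (tendsto_const_nhds.max (survPrev_tendsto h₂))).max
      tendsto_const_nhds)
  have heq : max (min (F₁ i) 1 - max (cdfPrev F₁ i) 0) 0 = F₁ i - cdfPrev F₁ i := by
    rw [min_eq_left (isCDF_le_one h₁ i), max_eq_left (cdfPrev_nonneg h₁ i),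
      max_eq_left (by linarith [cdfPrev_le_self h₁ i])]
  rw [heq] at hlim
  exact hlim.congr (fun n => (row_partial h₁ h₂ i n).symm)

/-- Partial column sums. -/
lemma col_partial (h₁ : IsCDF F₁) (h₂ : IsCDF F₂) (j n : ℕ) :
    ∑ i ∈ Finset.range n, antiCoupling F₁ F₂ i j
      = max (min (cdfPrev F₁ n) (survPrev F₂ j) - max 0 (1 - F₂ j)) 0 := by
  induction n with
  | zero =>
    have hc0 : cdfPrev F₁ 0 = 0 := by simp [cdfPrev]
    rw [Finset.range_zero, Finset.sum_empty, hc0, eq_comm, max_eq_right]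
    have := min_le_left (0 : ℝ) (survPrev F₂ j)
    have := le_max_left (0 : ℝ) (1 - F₂ j)
    linarith
  | succ n ih =>
    rw [Finset.sum_range_succ, ih]
    have key := Lstep' (0 : ℝ) (cdfPrev F₁ n) (cdfPrev F₁ (n+1)) (1 - F₂ j) (survPrev F₂ j)
      (cdfPrev_nonneg h₁ n) (cdfPrev_mono h₁ (Nat.le_succ n))
      (by rw [survPrev_eq]; linarith [cdfPrev_le_self h₂ j])
    unfold antiCoupling
    rw [cdfPrev_succ] at key
    exact key

lemma col_hasSum (h₁ : IsCDF F₁) (h₂ : IsCDF F₂) (j : ℕ) :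
    HasSum (fun i => antiCoupling F₁ F₂ i j) (F₂ j - cdfPrev F₂ j) := by
  rw [hasSum_iff_tendsto_nat_of_nonneg (fun i => antiCoupling_nonneg F₁ F₂ i j)]
  have hlim : Tendsto
      (fun n => max (min (cdfPrev F₁ n) (survPrev F₂ j) - max 0 (1 - F₂ j)) 0) atTop
      (nhds (max (min 1 (survPrev F₂ j) - max 0 (1 - F₂ j)) 0)) :=
    (((cdfPrev_tendsto h₁).min tendsto_const_nhds).sub tendsto_const_nhds).max
      tendsto_const_nhds
  have heq : max (min 1 (survPrev F₂ j) - max 0 (1 - F₂ j)) 0 = F₂ j - cdfPrev F₂ j := by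
    rw [survPrev_eq]
    have a1 := cdfPrev_nonneg h₂ j
    have a2 := isCDF_le_one h₂ j
    have a3 := cdfPrev_le_self h₂ j
    simp only [min_def, max_def]
    split_ifs <;> linarith
  rw [heq] at hlim
  exact hlim.congr (fun n => (col_partial h₁ h₂ j n).symm)

lemma total_hasSum (h₁ : IsCDF F₁) :
    HasSum (fun i => F₁ i - cdfPrev F₁ i) 1 := by
  rw [hasSum_iff_tendsto_nat_of_nonneg
    (fun i => by linarith [cdfPrev_le_self h₁ i])]
  have key : ∀ n, ∑ i ∈ Finset.range n, (F₁ i - cdfPrev F₁ i) = cdfPrev F₁ n := by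
    intro n
    induction n with
    | zero => simp [cdfPrev]
    | succ n ih => rw [Finset.sum_range_succ, ih, cdfPrev_succ]; ring
  simp only [key]
  exact cdfPrev_tendsto h₁

end main

/-- The antimonotone coupling is a probability mass function on ℤ≥0 × ℤ≥0 with the
prescribed marginal CDFs. -/
theorem antiCoupling_isPMF_with_marginals
    (F₁ F₂ : ℕ → ℝ) (h₁ : IsCDF F₁) (h₂ : IsCDF F₂) :
    (∀ i j, 0 ≤ antiCoupling F₁ F₂ i j) ∧
    (∑' ij : ℕ × ℕ, antiCoupling F₁ F₂ ij.1 ij.2 = 1) ∧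
    (∀ i, ∑' j, antiCoupling F₁ F₂ i j = F₁ i - cdfPrev F₁ i) ∧
    (∀ j, ∑' i, antiCoupling F₁ F₂ i j = F₂ j - cdfPrev F₂ j) := by
  have hrow := row_hasSum h₁ h₂
  have hcol := col_hasSum h₁ h₂
  have htot := total_hasSum h₁
  have hsummable : Summable (fun ij : ℕ × ℕ => antiCoupling F₁ F₂ ij.1 ij.2) := by
    rw [summable_prod_of_nonneg (fun ij => antiCoupling_nonneg F₁ F₂ ij.1 ij.2)]
    refine ⟨fun i => (hrow i).summable, ?_⟩
    have : (fun i => ∑' j, antiCoupling F₁ F₂ i j) = fun i => F₁ i - cdfPrev F₁ i := by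
      funext i; exact (hrow i).tsum_eq
    rw [this]
    exact htot.summable
  refine ⟨antiCoupling_nonneg F₁ F₂, ?_, fun i => (hrow i).tsum_eq,
    fun j => (hcol j).tsum_eq⟩
  rw [Summable.tsum_prod' hsummable (fun i => (hrow i).summable)]
  calc ∑' i, ∑' j, antiCoupling F₁ F₂ i j
      = ∑' i, (F₁ i - cdfPrev F₁ i) := by
        exact tsum_congr (fun i => (hrow i).tsum_eq)
    _ = 1 := htot.tsum_eq
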